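/- The dyadic maximal function associated with the collection D_1 (the union of the standard dyadic grid shifts D_{1,0,+1/3} and D_{1,0,−1/3}) dominates an absolute constant multiple of the uncentered Hardy–Littlewood maximal function: there is c > 0 so that for all locally integrable f ≥ 0 and x ∈ ℝ, M^{D_1} f(x) ≥ c M f(x). -/
import Mathlib


open MeasureTheory

/-- The uncentered Hardy–Littlewood maximal function (over open intervals),
with values in `ℝ≥0∞`. -/
noncomputable def maxHL (f : ℝ → ℝ) (x : ℝ) : ENNReal :=
  ⨆ (a : ℝ) (b : ℝ) (_ : a < b) (_ : x ∈ Set.Ioo a b),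
    (∫⁻ y in Set.Ioo a b, ENNReal.ofReal (f y)) / volume (Set.Ioo a b)

/-- The maximal function over the shifted grids `D_1 = D_{1,0,1/3} ∪ D_{1,0,-1/3}`. -/
noncomputable def maxD1 (f : ℝ → ℝ) (x : ℝ) : ENNReal :=
  ⨆ (k : ℤ) (j : ℤ) (α : ℝ) (_ : α = (1 : ℝ) / 3 ∨ α = -(1 : ℝ) / 3)
    (_ : x ∈ Set.Ioo ((2 : ℝ) ^ k * ((j : ℝ) + (-1 : ℝ) ^ k * α))
        ((2 : ℝ) ^ k * (1 + (j : ℝ) + (-1 : ℝ) ^ k * α))),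
    (∫⁻ y in Set.Ioo ((2 : ℝ) ^ k * ((j : ℝ) + (-1 : ℝ) ^ k * α))
        ((2 : ℝ) ^ k * (1 + (j : ℝ) + (-1 : ℝ) ^ k * α)), ENNReal.ofReal (f y)) /
      volume (Set.Ioo ((2 : ℝ) ^ k * ((j : ℝ) + (-1 : ℝ) ^ k * α))
        ((2 : ℝ) ^ k * (1 + (j : ℝ) + (-1 : ℝ) ^ k * α)))

lemma exists_k (ℓ : ℝ) (hℓ : 0 < ℓ) : ∃ k : ℤ, 3 * ℓ < (2:ℝ)^k ∧ (2:ℝ)^k ≤ 6 * ℓ := by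
  obtain ⟨n, hn1, hn2⟩ := exists_mem_Ico_zpow (by positivity : (0:ℝ) < 3*ℓ) (by norm_num : (1:ℝ) < 2)
  refine ⟨n+1, hn2, ?_⟩
  rw [zpow_add_one₀ (by norm_num : (2:ℝ) ≠ 0)]
  nlinarith

lemma int_abs_aux (m : ℤ) (β : ℝ) (hβ : β = 1 ∨ β = -1) : (1:ℝ)/3 ≤ |(m:ℝ) + 2*β/3| := by
  have key : (1:ℝ) ≤ |3*((m:ℝ) + 2*β/3)| := by
    rcases hβ with h|h <;> subst h
    · have h2 : (1:ℤ) ≤ |3*m+2| := Int.one_le_abs (by omega)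
      have h3 : (1:ℝ) ≤ |3*(m:ℝ)+2| := by exact_mod_cast h2
      rw [show 3*((m:ℝ) + 2*1/3) = 3*(m:ℝ)+2 by ring]
      exact h3
    · have h2 : (1:ℤ) ≤ |3*m-2| := Int.one_le_abs (by omega)
      have h3 : (1:ℝ) ≤ |3*(m:ℝ)-2| := by exact_mod_cast h2
      rw [show 3*((m:ℝ) + 2*(-1)/3) = 3*(m:ℝ)-2 by ring]
      exact h3
  rw [abs_mul, abs_of_pos (by norm_num : (0:ℝ) < 3)] at key
  linarith

lemma neg_one_pm (k : ℤ) : (-1:ℝ)^k = 1 ∨ (-1:ℝ)^k = -1 := by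
  rcases Int.even_or_odd k with h|h
  · exact Or.inl (h.neg_one_zpow)
  · exact Or.inr (h.neg_one_zpow)

lemma avoid (k : ℤ) (a b : ℝ) (h : 3*(b-a) < (2:ℝ)^k) :
    ∃ α : ℝ, (α = (1:ℝ)/3 ∨ α = -(1:ℝ)/3) ∧
      ∀ j : ℤ, (2:ℝ)^k * ((j:ℝ) + (-1:ℝ)^k * α) ∉ Set.Ioo a b := by
  by_cases H : ∀ j : ℤ, (2:ℝ)^k * ((j:ℝ) + (-1:ℝ)^k * ((1:ℝ)/3)) ∉ Set.Ioo a b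
  · exact ⟨(1:ℝ)/3, Or.inl rfl, H⟩
  refine ⟨-(1:ℝ)/3, Or.inr rfl, fun j' hj' => ?_⟩
  push_neg at H
  obtain ⟨j, hj⟩ := H
  have hβ := neg_one_pm k
  set β := (-1:ℝ)^k with hβdef
  have hk : (0:ℝ) < 2^k := by positivity
  obtain ⟨h1, h2⟩ := hj
  obtain ⟨h3, h4⟩ := hj'
  have hd : |(2:ℝ)^k*((j:ℝ)+β*((1:ℝ)/3)) - 2^k*((j':ℝ)+β*(-(1:ℝ)/3))| < b - a := by
    rw [abs_lt]; constructor <;> linarith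
  have heq : (2:ℝ)^k*((j:ℝ)+β*((1:ℝ)/3)) - 2^k*((j':ℝ)+β*(-(1:ℝ)/3))
      = 2^k * (((j - j' : ℤ):ℝ) + 2*β/3) := by push_cast; ring
  rw [heq, abs_mul, abs_of_pos hk] at hd
  have habs := int_abs_aux (j - j') β hβ
  nlinarith

lemma key_lemma (f : ℝ → ℝ) (a b x : ℝ) (hab : a < b) (hx : x ∈ Set.Ioo a b) :
    ENNReal.ofReal (1/6) * ((∫⁻ y in Set.Ioo a b, ENNReal.ofReal (f y)) / volume (Set.Ioo a b))
      ≤ maxD1 f x := by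
  obtain ⟨k, hk1, hk2⟩ := exists_k (b-a) (by linarith)
  obtain ⟨α, hα, havoid⟩ := avoid k a b hk1
  have hk : (0:ℝ) < 2^k := by positivity
  set β := (-1:ℝ)^k with hβdef
  set j : ℤ := ⌊a/2^k - β*α⌋ with hjdef
  have hfl := Int.floor_le (a/2^k - β*α)
  have hfl2 := Int.lt_floor_add_one (a/2^k - β*α)
  rw [← hjdef] at hfl hfl2
  have hp : (2:ℝ)^k * ((j:ℝ) + β*α) ≤ a := by
    have h1 : (j:ℝ) + β*α ≤ a/2^k := by linarith
    calc (2:ℝ)^k * ((j:ℝ) + β*α) ≤ 2^k * (a/2^k) := by nlinarith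
    _ = a := by field_simp
  have hq : b ≤ (2:ℝ)^k * (1 + (j:ℝ) + β*α) := by
    by_contra hc
    push_neg at hc
    have h2 : a < (2:ℝ)^k * (1 + (j:ℝ) + β*α) := by
      have h1 : a/2^k < 1 + (j:ℝ) + β*α := by linarith
      calc a = 2^k * (a/2^k) := by field_simp
      _ < _ := by nlinarith
    refine havoid (j+1) ?_
    have : (2:ℝ)^k * (((j+1:ℤ):ℝ) + β*α) = 2^k * (1 + (j:ℝ) + β*α) := by push_cast; ring
    rw [this]
    exact ⟨h2, hc⟩
  have hsub : Set.Ioo a b ⊆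
      Set.Ioo ((2:ℝ)^k * ((j:ℝ) + β*α)) ((2:ℝ)^k * (1 + (j:ℝ) + β*α)) :=
    Set.Ioo_subset_Ioo hp hq
  have hxJ : x ∈ Set.Ioo ((2:ℝ)^k * ((j:ℝ) + β*α)) ((2:ℝ)^k * (1 + (j:ℝ) + β*α)) := hsub hx
  set A := ∫⁻ y in Set.Ioo a b, ENNReal.ofReal (f y) with hA
  set B := ∫⁻ y in Set.Ioo ((2:ℝ)^k * ((j:ℝ) + β*α)) ((2:ℝ)^k * (1 + (j:ℝ) + β*α)),
    ENNReal.ofReal (f y) with hB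
  have hAB : A ≤ B := lintegral_mono_set hsub
  have hvol1 : volume (Set.Ioo a b) = ENNReal.ofReal (b-a) := Real.volume_Ioo
  have hvol2 : volume (Set.Ioo ((2:ℝ)^k * ((j:ℝ) + β*α)) ((2:ℝ)^k * (1 + (j:ℝ) + β*α)))
      = ENNReal.ofReal ((2:ℝ)^k) := by
    rw [Real.volume_Ioo]; ring_nf
  have main : ENNReal.ofReal (1/6) * (A / ENNReal.ofReal (b-a))
      ≤ B / ENNReal.ofReal ((2:ℝ)^k) := by
    have hstep : ENNReal.ofReal (1/6) / ENNReal.ofReal (b-a) ≤ (ENNReal.ofReal ((2:ℝ)^k))⁻¹ := by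
      rw [← ENNReal.ofReal_div_of_pos (by linarith : (0:ℝ) < b - a),
        ← ENNReal.ofReal_inv_of_pos hk]
      apply ENNReal.ofReal_le_ofReal
      rw [show (1:ℝ)/6/(b-a) = 1/(6*(b-a)) by field_simp, ← one_div]
      exact one_div_le_one_div_of_le hk hk2
    calc ENNReal.ofReal (1/6) * (A / ENNReal.ofReal (b-a))
        = A * (ENNReal.ofReal (1/6) / ENNReal.ofReal (b-a)) := by
          rw [ENNReal.div_eq_inv_mul, ENNReal.div_eq_inv_mul]; ring
      _ ≤ B * (ENNReal.ofReal ((2:ℝ)^k))⁻¹ := mul_le_mul' hAB hstep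
      _ = B / ENNReal.ofReal ((2:ℝ)^k) := by rw [ENNReal.div_eq_inv_mul]; ring
  rw [hvol1]
  refine le_trans main ?_
  rw [maxD1]
  refine le_iSup_of_le k ?_
  refine le_iSup_of_le j ?_
  refine le_iSup_of_le α ?_
  refine le_iSup_of_le hα ?_
  refine le_iSup_of_le hxJ ?_
  rw [hvol2]

theorem hankel_stmt8 :
    ∃ c : ℝ, 0 < c ∧ ∀ f : ℝ → ℝ, (∀ x, 0 ≤ f x) →
      LocallyIntegrable f volume → ∀ x : ℝ,
        ENNReal.ofReal c * maxHL f x ≤ maxD1 f x := by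
  refine ⟨1/6, by norm_num, fun f hf hloc x => ?_⟩
  rw [maxHL]
  simp only [ENNReal.mul_iSup]
  exact iSup_le fun a => iSup_le fun b => iSup_le fun hab => iSup_le fun hx =>
    key_lemma f a b x hab hx
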